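/- arXiv:0708.2179 — 2 statements merged into one kernel-verified Lean document; each statement's English description precedes it below -/
import Mathlib

section
/- If a positive semidefinite trigonometric polynomial S(z) = \sum_{n=-m}^m \sigma_n z^n on the unit circle (with scalar complex coefficients) is nonnegative for all |z|=1, then there exists an analytic polynomial p(z) = \sum_{n=0}^m \rho_n z^n such that S(z) = |p(z)|^2 for all |z|=1. -/
open MeasureTheory Complex Metric Set Matrix
open scoped ComplexOrder

/-- Membership in the Hardy space `H_p` (`0 < p < ∞`) of the unit disk:
analytic on the open unit disk with uniformly bounded `p`-th power means. -/
def HardyMem (p : ℝ) (f : ℂ → ℂ) : Prop :=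
  DifferentiableOn ℂ f (ball (0:ℂ) 1) ∧
  ∃ C : ℝ, ∀ r : ℝ, 0 ≤ r → r < 1 →
    (∫ t in (0:ℝ)..(2 * Real.pi), ‖f ((r : ℂ) * Complex.exp (t * Complex.I))‖ ^ p) ≤ C

/-- Membership in `H_∞`: bounded analytic functions on the unit disk. -/
def HardyInfMem (f : ℂ → ℂ) : Prop :=
  DifferentiableOn ℂ f (ball (0:ℂ) 1) ∧ ∃ C : ℝ, ∀ z ∈ ball (0:ℂ) 1, ‖f z‖ ≤ C

/-- `F` is the boundary-value function of `f` : radial limits a.e. on the circle. -/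
def IsBoundaryValue (f : ℂ → ℂ) (F : ℝ → ℂ) : Prop :=
  ∀ᵐ (t : ℝ) ∂(volume.restrict (Set.Ioc (0:ℝ) (2*Real.pi))),
    Filter.Tendsto (fun r : ℝ => f ((r:ℂ) * Complex.exp (t * Complex.I)))
      (nhdsWithin 1 (Set.Iio 1)) (nhds (F t))

/-- `n`-th Fourier coefficient of a function on the unit circle. -/
noncomputable def fc (F : ℝ → ℂ) (n : ℤ) : ℂ :=
  (2 * Real.pi)⁻¹ * ∫ t in (0:ℝ)..(2*Real.pi), F t * Complex.exp (-(n : ℂ) * t * Complex.I)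

/-- An outer function on the unit disk, given by the canonical exponential
representation with integrable `log k`. -/
def IsOuter (h : ℂ → ℂ) : Prop :=
  ∃ (c : ℂ) (k : ℝ → ℝ), ‖c‖ = 1 ∧
    IntervalIntegrable (fun t => Real.log (k t)) volume 0 (2*Real.pi) ∧
    ∀ z ∈ ball (0:ℂ) 1,
      h z = c * Complex.exp (((2*Real.pi : ℝ) : ℂ)⁻¹ *
        ∫ t in (0:ℝ)..(2*Real.pi),
          ((Complex.exp (t*Complex.I) + z)/(Complex.exp (t*Complex.I) - z)) * (Real.log (k t) : ℂ))

/-! Write `S(z) = z ^ (-m) * Q(z)` with `Q` a polynomial of degree at most `2m`. Since `S` is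
real on the circle, `Q` is self-reciprocal: `Q(z) = z ^ (2m) * conj (Q (conj z)⁻¹)`. Hence roots
of `Q` off the circle come in pairs `α, (conj α)⁻¹`, while a root `α` on the circle is double
because `t ↦ S(α e^{it})` is nonnegative and vanishes at `t = 0`. On the circle
`(z - α) (z - (conj α)⁻¹) = -(conj α)⁻¹ z |z - α| ^ 2`, so removing such a pair from `Q` writes
`S = |z - α| ^ 2 * S'` with `S'` nonnegative of order `m - 1` (when `Q(0) = 0`, self-reciprocity
instead gives `Q = z * Q'` with `S = z ^ (1 - m) * Q'(z)`); by induction on `m`, `S = |p| ^ 2`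
where `p` is the product of the factors `z - α`. -/

open Polynomial ComplexConjugate Filter Topology

lemma sum_Icc_neg_eq_sum_range {M : Type*} [AddCommMonoid M] (m : ℕ) (f : ℤ → M) :
    ∑ n ∈ Finset.Icc (-(m : ℤ)) m, f n = ∑ n ∈ Finset.range (2 * m + 1), f (n - m) := by
  refine Finset.sum_nbij' (fun n => (n + m).toNat) (fun n => n - m) ?_ ?_ ?_ ?_ ?_ <;>
    intros <;> simp_all <;> first | omega | (congr 1; omega)

noncomputable def trigNumerator (m : ℕ) (σ : ℤ → ℂ) : ℂ[X] :=
  ∑ n ∈ Finset.range (2 * m + 1), monomial n (σ (n - m))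

lemma natDegree_trigNumerator_le (m : ℕ) (σ : ℤ → ℂ) : (trigNumerator m σ).natDegree ≤ 2 * m :=
  natDegree_sum_le_of_forall_le _ _ fun _ hn =>
    (natDegree_monomial_le _).trans (Nat.lt_succ_iff.mp (Finset.mem_range.mp hn))

lemma sum_Icc_mul_zpow_eq (m : ℕ) (σ : ℤ → ℂ) {z : ℂ} (hz : z ≠ 0) :
    ∑ n ∈ Finset.Icc (-(m : ℤ)) m, σ n * z ^ n = z ^ (-(m : ℤ)) * (trigNumerator m σ).eval z := by
  rw [sum_Icc_neg_eq_sum_range, trigNumerator, eval_finsetSum, Finset.mul_sum]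
  refine Finset.sum_congr rfl fun n _ => ?_
  rw [eval_monomial, zpow_sub₀ hz, zpow_natCast, _root_.zpow_neg, zpow_natCast]
  ring

lemma infinite_sphere_zero_one : (sphere (0 : ℂ) 1).Infinite := by
  have hinj : InjOn (fun t : ℝ => exp (t * I)) (Icc 0 Real.pi) := fun s hs t ht hst =>
    Real.injOn_cos hs ht (by simpa [exp_ofReal_mul_I_re] using congrArg re hst)
  refine ((Icc_infinite Real.pi_pos).image hinj).mono ?_
  rintro _ ⟨t, -, rfl⟩
  simp [norm_exp_ofReal_mul_I]

lemma Polynomial.eq_of_eval_eq_on_circle {P Q : ℂ[X]}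
    (h : ∀ z : ℂ, ‖z‖ = 1 → P.eval z = Q.eval z) : P = Q :=
  eq_of_infinite_eval_eq P Q (infinite_sphere_zero_one.mono fun z hz => h z (by simpa using hz))

noncomputable def conjReflect (N : ℕ) (Q : ℂ[X]) : ℂ[X] := reflect N (Q.map (starRingEnd ℂ))

lemma eval_conjReflect {N : ℕ} {Q : ℂ[X]} (hQ : Q.natDegree ≤ N) {z : ℂ} (hz : z ≠ 0) :
    (conjReflect N Q).eval z = z ^ N * conj (Q.eval (conj z)⁻¹) := by
  let _ : Invertible z⁻¹ := invertibleOfNonzero (inv_ne_zero hz)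
  have h := eval₂_reflect_mul_pow (RingHom.id ℂ) z⁻¹ N (Q.map (starRingEnd ℂ))
    (natDegree_map_le.trans hQ)
  rw [invOf_eq_inv, inv_inv, ← eval, ← eval, eval_map, inv_pow] at h
  rw [conjReflect, ← eval₂_at_apply, map_inv₀, conj_conj, ← h]
  field_simp

lemma coeff_zero_eq_conj_coeff {N : ℕ} {Q : ℂ[X]} (h : conjReflect N Q = Q) :
    Q.coeff 0 = conj (Q.coeff N) := by
  conv_lhs => rw [← h]
  rw [conjReflect, coeff_reflect, revAt_le (Nat.zero_le N), Nat.sub_zero, coeff_map]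

lemma eval_conj_inv_eq_zero {N : ℕ} {Q : ℂ[X]} (hQ : Q.natDegree ≤ N) (h : conjReflect N Q = Q)
    {α : ℂ} (hα : α ≠ 0) (hroot : Q.eval α = 0) : Q.eval (conj α)⁻¹ = 0 := by
  rw [← h, eval_conjReflect hQ (by simpa using hα)]
  simp [hroot]

lemma conjReflect_eq_self_of_im_eq_zero {k : ℕ} {Q : ℂ[X]} (hdeg : Q.natDegree ≤ 2 * k)
    (hQ : ∀ z : ℂ, ‖z‖ = 1 → (z ^ (-(k : ℤ)) * Q.eval z).im = 0) :
    conjReflect (2 * k) Q = Q := by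
  refine eq_of_eval_eq_on_circle fun z hz => ?_
  have hz0 : z ≠ 0 := by rintro rfl; simp at hz
  have hconj : conj z = z⁻¹ := (inv_eq_conj hz).symm
  have hreal := conj_eq_iff_im.mpr (hQ z hz)
  rw [map_mul, map_zpow₀, hconj, _root_.inv_zpow', neg_neg, _root_.zpow_neg, zpow_natCast] at hreal
  rw [eval_conjReflect hdeg hz0, hconj, inv_inv, pow_mul']
  field_simp at hreal
  linear_combination hreal

-- `0 ≤ w` is taken in `ComplexOrder`: it says that `w` is real and nonnegative.
def NonnegOnCircle (k : ℕ) (Q : ℂ[X]) : Prop :=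
  ∀ z : ℂ, ‖z‖ = 1 → 0 ≤ z ^ (-(k : ℤ)) * Q.eval z

lemma NonnegOnCircle.im_eq_zero {k : ℕ} {Q : ℂ[X]} (hQ : NonnegOnCircle k Q) (z : ℂ)
    (hz : ‖z‖ = 1) : (z ^ (-(k : ℤ)) * Q.eval z).im = 0 :=
  (nonneg_iff.mp (hQ z hz)).2.symm

lemma NonnegOnCircle.eval_derivative_eq_zero {k : ℕ} {Q : ℂ[X]} (hQ : NonnegOnCircle k Q)
    {α : ℂ} (hα : ‖α‖ = 1) (hroot : Q.eval α = 0) : Q.derivative.eval α = 0 := by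
  have hα0 : α ≠ 0 := by rintro rfl; simp at hα
  set f : ℂ → ℂ := fun z => z ^ (-(k : ℤ)) * Q.eval z
  set c : ℝ → ℂ := fun t => α * exp (t * I)
  have hc0 : c 0 = α := by simp [c]
  have hc : ∀ t, ‖c t‖ = 1 := fun t => by simp [c, hα, norm_exp_ofReal_mul_I]
  have hf : HasDerivAt f (α ^ (-(k : ℤ)) * Q.derivative.eval α) (c 0) := by
    have := (hasDerivAt_zpow (-(k : ℤ)) α (Or.inl hα0)).mul (Q.hasDerivAt α)
    rw [hroot, mul_zero, zero_add] at this
    rwa [hc0]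
  have hcd : HasDerivAt c (α * I) 0 := by
    simpa using (((hasDerivAt_id (0 : ℝ)).ofReal_comp.mul_const I).cexp.const_mul α)
  have hfc := hf.comp (0 : ℝ) hcd
  set D := α ^ (-(k : ℤ)) * Q.derivative.eval α * (α * I)
  have hmin : f (c 0) = 0 := by simp [f, hc0, hroot]
  have hval t : 0 ≤ (f (c t)).re ∧ 0 = (f (c t)).im := nonneg_iff.mp (hQ (c t) (hc t))
  have hre : D.re = 0 := by
    refine IsLocalMin.hasDerivAt_eq_zero (Eventually.of_forall fun t => ?_)
      (reCLM.hasFDerivAt.comp_hasDerivAt 0 hfc)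
    simpa [hmin] using (hval t).1
  have him : D.im = 0 := by
    refine IsLocalMin.hasDerivAt_eq_zero (Eventually.of_forall fun t => ?_)
      (imCLM.hasFDerivAt.comp_hasDerivAt 0 hfc)
    simp [hmin, ← (hval t).2]
  have hD : D = 0 := Complex.ext hre him
  simpa [D, hα0, I_ne_zero] using hD

lemma nonneg_of_forall_nonneg_on_circle_of_ne {f : ℂ → ℂ} {α : ℂ} (hα : ‖α‖ = 1)
    (hf : ContinuousAt f α) (h : ∀ z : ℂ, ‖z‖ = 1 → z ≠ α → 0 ≤ f z) : 0 ≤ f α := by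
  have hα0 : α ≠ 0 := by rintro rfl; simp at hα
  set c : ℝ → ℂ := fun t => α * exp (t * I)
  have hc : Tendsto c (𝓝[>] 0) (𝓝 α) :=
    ((show Continuous c by fun_prop).tendsto' 0 α (by simp [c])).mono_left nhdsWithin_le_nhds
  refine ge_of_tendsto (hf.tendsto.comp hc) ?_
  filter_upwards [Ioo_mem_nhdsGT Real.pi_pos] with t ht
  refine h _ (by simp [c, hα, norm_exp_ofReal_mul_I]) fun hcα => ?_
  have hexp : exp (t * I) = 1 := by simpa [c, hα0] using hcα
  have hsin := Real.sin_pos_of_pos_of_lt_pi ht.1 ht.2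
  rw [← exp_ofReal_mul_I_im, hexp, one_im] at hsin
  exact hsin.false

lemma NonnegOnCircle.exists_eq_mul_root_pair {k : ℕ} {Q : ℂ[X]} (hdeg : Q.natDegree ≤ 2 * k)
    (hQ : NonnegOnCircle k Q) {α : ℂ} (hα : α ≠ 0) (hroot : Q.IsRoot α) :
    ∃ R : ℂ[X], Q = (X - C α) * (X - C (conj α)⁻¹) * R := by
  by_cases hcirc : ‖α‖ = 1
  · rw [← inv_eq_conj hcirc, inv_inv, ← pow_two]
    rcases eq_or_ne Q 0 with rfl | hQ0
    · exact ⟨0, by simp⟩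
    have hmult : 1 < Q.rootMultiplicity α :=
      (one_lt_rootMultiplicity_iff_isRoot hQ0).mpr ⟨hroot, hQ.eval_derivative_eq_zero hcirc hroot⟩
    exact (le_rootMultiplicity_iff hQ0).mp hmult
  · have hne : α ≠ (conj α)⁻¹ := fun h => hcirc <| by
      have hnorm := congrArg norm h
      rw [norm_inv, norm_conj] at hnorm
      have hpos := norm_pos_iff.mpr hα
      field_simp at hnorm
      nlinarith
    have hγ : Q.IsRoot (conj α)⁻¹ :=
      eval_conj_inv_eq_zero hdeg (conjReflect_eq_self_of_im_eq_zero hdeg hQ.im_eq_zero) hα hroot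
    exact (isCoprime_X_sub_C_of_isUnit_sub (sub_ne_zero.mpr hne).isUnit).mul_dvd
      (dvd_iff_isRoot.mpr hroot) (dvd_iff_isRoot.mpr hγ)

lemma exists_eq_X_mul_of_coeff_zero_eq_zero {k : ℕ} {Q : ℂ[X]} (hdeg : Q.natDegree ≤ 2 * (k + 1))
    (hsymm : conjReflect (2 * (k + 1)) Q = Q) (h0 : Q.coeff 0 = 0) :
    ∃ P : ℂ[X], P.natDegree ≤ 2 * k ∧ Q = X * P := by
  obtain ⟨P, rfl⟩ := X_dvd_iff.mpr h0
  refine ⟨P, natDegree_le_iff_coeff_eq_zero.mpr fun n hn => ?_, rfl⟩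
  have htop : (X * P).coeff (2 * (k + 1)) = 0 := by
    simpa [h0] using (coeff_zero_eq_conj_coeff hsymm).symm
  rw [← coeff_X_mul]
  obtain h | h : n + 1 = 2 * (k + 1) ∨ 2 * (k + 1) < n + 1 := by omega
  · rwa [h]
  · exact coeff_eq_zero_of_natDegree_lt (hdeg.trans_lt h)

lemma NonnegOnCircle.of_eq_sq_norm_sub_mul {k : ℕ} {Q P : ℂ[X]} (hQ : NonnegOnCircle (k + 1) Q)
    {α : ℂ} (hα : α ≠ 0)
    (hQP : ∀ z : ℂ, ‖z‖ = 1 → z ^ (-((k + 1 : ℕ) : ℤ)) * Q.eval z =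
      ((‖z - α‖ ^ 2 : ℝ) : ℂ) * (z ^ (-(k : ℤ)) * P.eval z)) :
    NonnegOnCircle k P := by
  have hne : ∀ z : ℂ, ‖z‖ = 1 → z ≠ α → 0 ≤ z ^ (-(k : ℤ)) * P.eval z := fun z hz hzα => by
    have hpos : (0 : ℂ) < ((‖z - α‖ ^ 2 : ℝ) : ℂ) :=
      zero_lt_real.mpr (pow_pos (norm_pos_iff.mpr (sub_ne_zero.mpr hzα)) 2)
    have := mul_nonneg (inv_nonneg.mpr hpos.le) (hQP z hz ▸ hQ z hz)
    rwa [inv_mul_cancel_left₀ hpos.ne'] at this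
  intro z hz
  rcases eq_or_ne z α with rfl | hzα
  · exact nonneg_of_forall_nonneg_on_circle_of_ne (f := fun z => z ^ (-(k : ℤ)) * P.eval z) hz
      ((continuousAt_zpow₀ _ _ (Or.inl hα)).mul P.continuous.continuousAt) hne
  · exact hne z hz hzα

lemma sub_mul_sub_conj_inv {α z : ℂ} (hα : α ≠ 0) (hz : ‖z‖ = 1) :
    (z - α) * (z - (conj α)⁻¹) = -(conj α)⁻¹ * z * ((‖z - α‖ ^ 2 : ℝ) : ℂ) := by
  have hzz : z * conj z = 1 := by rw [mul_conj, normSq_eq_norm_sq, hz]; norm_num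
  have hαα : (conj α)⁻¹ * conj α = 1 := inv_mul_cancel₀ (by simpa using hα)
  push_cast
  rw [← mul_conj', map_sub]
  linear_combination ((z - α) * (conj α)⁻¹) * hzz - ((z - α) * z) * hαα

lemma zpow_mul_eval_root_pair (k : ℕ) (R : ℂ[X]) {α z : ℂ} (hα : α ≠ 0) (hz : ‖z‖ = 1) :
    z ^ (-((k + 1 : ℕ) : ℤ)) * ((X - C α) * (X - C (conj α)⁻¹) * R).eval z =
      ((‖z - α‖ ^ 2 : ℝ) : ℂ) * (z ^ (-(k : ℤ)) * (C (-(conj α)⁻¹) * R).eval z) := by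
  have hz0 : z ≠ 0 := by rintro rfl; simp at hz
  rw [eval_mul, eval_mul, eval_sub, eval_sub, eval_X, eval_C, eval_C, sub_mul_sub_conj_inv hα hz,
    eval_mul, eval_C, _root_.zpow_neg, _root_.zpow_neg, zpow_natCast, zpow_natCast, pow_succ]
  field_simp

lemma NonnegOnCircle.exists_descent {k : ℕ} {Q : ℂ[X]} (hdeg : Q.natDegree ≤ 2 * (k + 1))
    (hQ : NonnegOnCircle (k + 1) Q) :
    ∃ q P : ℂ[X], q.natDegree ≤ 1 ∧ P.natDegree ≤ 2 * k ∧ NonnegOnCircle k P ∧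
      ∀ z : ℂ, ‖z‖ = 1 → z ^ (-((k + 1 : ℕ) : ℤ)) * Q.eval z =
        ((‖q.eval z‖ ^ 2 : ℝ) : ℂ) * (z ^ (-(k : ℤ)) * P.eval z) := by
  have hsymm := conjReflect_eq_self_of_im_eq_zero hdeg hQ.im_eq_zero
  by_cases h0 : Q.coeff 0 = 0
  · obtain ⟨P, hP, rfl⟩ := exists_eq_X_mul_of_coeff_zero_eq_zero hdeg hsymm h0
    have hPQ : ∀ z : ℂ, ‖z‖ = 1 →
        z ^ (-((k + 1 : ℕ) : ℤ)) * (X * P).eval z = z ^ (-(k : ℤ)) * P.eval z := fun z hz => by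
      have hz0 : z ≠ 0 := by rintro rfl; simp at hz
      rw [eval_mul, eval_X, _root_.zpow_neg, _root_.zpow_neg, zpow_natCast, zpow_natCast, pow_succ]
      field_simp
    exact ⟨1, P, by simp, hP, fun z hz => hPQ z hz ▸ hQ z hz, fun z hz => by rw [hPQ z hz]; simp⟩
  have htop : Q.coeff (2 * (k + 1)) ≠ 0 := fun h => h0 <| by
    rw [coeff_zero_eq_conj_coeff hsymm, h, map_zero]
  have hdegpos : 0 < Q.degree :=
    (WithBot.coe_pos.mpr (by omega : 0 < 2 * (k + 1))).trans_le (le_degree_of_ne_zero htop)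
  obtain ⟨α, hroot⟩ := exists_root hdegpos
  have hα : α ≠ 0 := by
    rintro rfl
    exact h0 (by simpa [coeff_zero_eq_eval_zero] using hroot)
  obtain ⟨R, hR⟩ := hQ.exists_eq_mul_root_pair hdeg hα hroot
  have hR0 : R ≠ 0 := by
    rintro rfl
    exact htop (by simp [hR])
  have hRdeg : R.natDegree ≤ 2 * k := by
    have := hR ▸ hdeg
    rw [natDegree_mul (mul_ne_zero (X_sub_C_ne_zero α) (X_sub_C_ne_zero (conj α)⁻¹)) hR0,
      natDegree_mul (X_sub_C_ne_zero α) (X_sub_C_ne_zero (conj α)⁻¹), natDegree_X_sub_C,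
      natDegree_X_sub_C] at this
    omega
  have hQP z (hz : ‖z‖ = 1) := hR ▸ zpow_mul_eval_root_pair k R hα hz
  exact ⟨X - C α, C (-(conj α)⁻¹) * R, natDegree_X_sub_C_le α,
    (natDegree_C_mul_le _ _).trans hRdeg, hQ.of_eq_sq_norm_sub_mul hα hQP, by simpa using hQP⟩

theorem NonnegOnCircle.exists_eq_sq_norm {k : ℕ} {Q : ℂ[X]} (hdeg : Q.natDegree ≤ 2 * k)
    (hQ : NonnegOnCircle k Q) :
    ∃ p : ℂ[X], p.natDegree ≤ k ∧
      ∀ z : ℂ, ‖z‖ = 1 → z ^ (-(k : ℤ)) * Q.eval z = ((‖p.eval z‖ ^ 2 : ℝ) : ℂ) := by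
  induction k generalizing Q with
  | zero =>
    obtain ⟨c, rfl⟩ : ∃ c, Q = C c := ⟨_, eq_C_of_natDegree_le_zero hdeg⟩
    obtain ⟨hre, him⟩ := nonneg_iff.mp (by simpa using hQ 1 (by simp))
    refine ⟨C (√c.re : ℂ), by simp, fun z _ => ?_⟩
    simpa [Real.sq_sqrt hre] using (Complex.ext rfl him.symm : c = c.re)
  | succ k ih =>
    obtain ⟨q, P, hq, hP, hPnonneg, hQP⟩ := hQ.exists_descent hdeg
    obtain ⟨p, hp, hpP⟩ := ih hP hPnonneg
    refine ⟨q * p, natDegree_mul_le.trans (by omega), fun z hz => ?_⟩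
    rw [hQP z hz, hpP z hz, eval_mul, norm_mul, mul_pow, ofReal_mul]

/-- Scalar Fejér–Riesz lemma. -/
theorem fejer_riesz_scalar (m : ℕ) (σ : ℤ → ℂ)
    (hpos : ∀ z : ℂ, ‖z‖ = 1 →
      (∑ n ∈ Finset.Icc (-(m:ℤ)) (m:ℤ), σ n * z ^ n).im = 0 ∧
      0 ≤ (∑ n ∈ Finset.Icc (-(m:ℤ)) (m:ℤ), σ n * z ^ n).re) :
    ∃ ρ : ℕ → ℂ, ∀ z : ℂ, ‖z‖ = 1 →
      ∑ n ∈ Finset.Icc (-(m:ℤ)) (m:ℤ), σ n * z ^ n =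
        ((‖∑ n ∈ Finset.range (m+1), ρ n * z ^ n‖ ^ 2 : ℝ) : ℂ) := by
  have hS : ∀ z : ℂ, ‖z‖ = 1 → ∑ n ∈ Finset.Icc (-(m:ℤ)) (m:ℤ), σ n * z ^ n =
      z ^ (-(m : ℤ)) * (trigNumerator m σ).eval z := fun z hz =>
    sum_Icc_mul_zpow_eq m σ (by rintro rfl; simp at hz)
  have hQ : NonnegOnCircle m (trigNumerator m σ) := fun z hz =>
    hS z hz ▸ nonneg_iff.mpr ⟨(hpos z hz).2, (hpos z hz).1.symm⟩
  obtain ⟨p, hp, hpQ⟩ := hQ.exists_eq_sq_norm (natDegree_trigNumerator_le m σ)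
  refine ⟨p.coeff, fun z hz => ?_⟩
  rw [hS z hz, hpQ z hz, eval_eq_sum_range' (Nat.lt_succ_of_le hp)]
end

section
/- If \chi^+ is an r×r matrix function with entries in H_2 of the unit disk such that S(z) = \chi^+(z)(\chi^+(z))^* a.e. on the unit circle for some matrix function S that is positive definite a.e. and has \log\det S \in L_1, then \det\chi^+ is not identically zero, and |\det\chi^+(z)|^2 = \det S(z) a.e. on the unit circle. -/
open MeasureTheory Complex Metric Set Matrix
open scoped ComplexOrder

/-! Taking determinants in `S = B Bᴴ` gives `det S = |det B|²`, which is positive a.e.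
Since `det B` is the radial boundary value of `det χ`, it would vanish a.e. if `det χ`
vanished on the disk. -/

open Filter Topology

theorem Matrix.det_mul_conjTranspose_self {n : Type*} [Fintype n] [DecidableEq n]
    (B : Matrix n n ℂ) : (B * Bᴴ).det = ((‖B.det‖ ^ 2 : ℝ) : ℂ) := by
  rw [det_mul, det_conjTranspose, ofReal_pow, ← mul_conj']
  rfl

theorem Matrix.tendsto_det_of_tendsto_entries {α n R : Type*} [Fintype n] [DecidableEq n]
    [CommRing R] [TopologicalSpace R] [IsTopologicalRing R] {l : Filter α}
    {f : α → Matrix n n R} {M : Matrix n n R}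
    (h : ∀ i j, Tendsto (fun x => f x i j) l (𝓝 (M i j))) :
    Tendsto (fun x => (f x).det) l (𝓝 M.det) :=
  ((continuous_id.matrix_det).tendsto M).comp
    (tendsto_pi_nhds.2 fun i => tendsto_pi_nhds.2 fun j => h i j)

theorem eventually_radial_mem_ball (t : ℝ) :
    ∀ᶠ ρ : ℝ in 𝓝[<] 1, (ρ : ℂ) * exp (t * I) ∈ ball (0 : ℂ) 1 := by
  filter_upwards [eventually_nhdsWithin_of_eventually_nhds (eventually_gt_nhds one_pos),
    self_mem_nhdsWithin] with ρ hρ0 hρ1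
  rw [mem_ball_zero_iff, norm_mul, norm_exp_ofReal_mul_I, mul_one, norm_real,
    Real.norm_of_nonneg hρ0.le]
  exact hρ1

theorem IsBoundaryValue.det {n : Type*} [Fintype n] [DecidableEq n] {χ : ℂ → Matrix n n ℂ}
    {B : ℝ → Matrix n n ℂ}
    (hB : ∀ i j, IsBoundaryValue (fun z => χ z i j) (fun t => B t i j)) :
    IsBoundaryValue (fun z => (χ z).det) (fun t => (B t).det) := by
  filter_upwards [ae_all_iff.2 fun i => ae_all_iff.2 fun j => hB i j] with t ht
  exact Matrix.tendsto_det_of_tendsto_entries ht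

theorem IsBoundaryValue.ae_eq_zero_of_eqOn_ball {f : ℂ → ℂ} {F : ℝ → ℂ}
    (hf : IsBoundaryValue f F) (h0 : ∀ z ∈ ball (0 : ℂ) 1, f z = 0) :
    ∀ᵐ t ∂(volume.restrict (Ioc (0 : ℝ) (2 * Real.pi))), F t = 0 := by
  filter_upwards [hf] with t ht
  refine tendsto_nhds_unique ht (tendsto_const_nhds.congr' ?_)
  filter_upwards [eventually_radial_mem_ball t] with ρ hρ
  exact (h0 _ hρ).symm

instance ae_restrict_Ioc_zero_two_pi_neBot :
    (ae (volume.restrict (Ioc (0 : ℝ) (2 * Real.pi)))).NeBot := by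
  rw [ae_restrict_neBot, Real.volume_Ioc]
  simp [Real.pi_pos]

theorem det_spectral_factor_general (r : ℕ) (χ : ℂ → (Matrix (Fin r) (Fin r) ℂ))
    (B : ℝ → (Matrix (Fin r) (Fin r) ℂ))
    (hB : ∀ i j, IsBoundaryValue (fun z => χ z i j) (fun t => B t i j))
    (S : ℝ → (Matrix (Fin r) (Fin r) ℂ))
    (hpos : ∀ᵐ (t : ℝ) ∂(MeasureTheory.volume.restrict (Set.Ioc (0:ℝ) (2*Real.pi))), (S t).PosDef)
    (hfact : ∀ᵐ (t : ℝ) ∂(MeasureTheory.volume.restrict (Set.Ioc (0:ℝ) (2*Real.pi))), S t = B t * (B t)ᴴ) :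
    (¬ ∀ z ∈ Metric.ball (0:ℂ) 1, (χ z).det = 0) ∧
    (∀ᵐ (t : ℝ) ∂(MeasureTheory.volume.restrict (Set.Ioc (0:ℝ) (2*Real.pi))), ((‖(B t).det‖ ^ 2 : ℝ) : ℂ) = (S t).det) := by
  have hdet : ∀ᵐ t ∂(volume.restrict (Ioc (0 : ℝ) (2 * Real.pi))),
      (S t).det = ((‖(B t).det‖ ^ 2 : ℝ) : ℂ) :=
    hfact.mono fun t ht => by rw [ht, det_mul_conjTranspose_self]
  refine ⟨fun hzero => ?_, hdet.mono fun t ht => ht.symm⟩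
  have hB0 := (IsBoundaryValue.det hB).ae_eq_zero_of_eqOn_ball hzero
  obtain ⟨t, hp, hd, h0⟩ := (hpos.and (hdet.and hB0)).exists
  exact hp.det_pos.ne' (by simp [hd, h0])

/-- For a spectral factor of a positive definite `S` with integrable `log det S`,
the determinant is not identically zero and `|det χ⁺|² = det S` a.e. -/
theorem det_spectral_factor (r : ℕ) (χ : ℂ → (Matrix (Fin r) (Fin r) ℂ))
    (hH2 : ∀ i j, HardyMem 2 (fun z => χ z i j))
    (B : ℝ → (Matrix (Fin r) (Fin r) ℂ))
    (hB : ∀ i j, IsBoundaryValue (fun z => χ z i j) (fun t => B t i j))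
    (S : ℝ → (Matrix (Fin r) (Fin r) ℂ))
    (hpos : ∀ᵐ (t : ℝ) ∂(MeasureTheory.volume.restrict (Set.Ioc (0:ℝ) (2*Real.pi))), (S t).PosDef)
    (hlog : IntervalIntegrable (fun t => Real.log ‖(S t).det‖)
      MeasureTheory.volume 0 (2*Real.pi))
    (hfact : ∀ᵐ (t : ℝ) ∂(MeasureTheory.volume.restrict (Set.Ioc (0:ℝ) (2*Real.pi))), S t = B t * (B t)ᴴ) :
    (¬ ∀ z ∈ Metric.ball (0:ℂ) 1, (χ z).det = 0) ∧
    (∀ᵐ (t : ℝ) ∂(MeasureTheory.volume.restrict (Set.Ioc (0:ℝ) (2*Real.pi))), ((‖(B t).det‖ ^ 2 : ℝ) : ℂ) = (S t).det) :=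
  det_spectral_factor_general r χ B hB S hpos hfact
end
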